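/- arXiv:2203.02401 — 3 statements merged into one kernel-verified Lean document; each statement's English description precedes it below -/
import Mathlib

section
/- Let β: ℝ → ℝ be a locally Lipschitz extended class K function, and let h: [0,∞) → ℝ be a differentiable function satisfying h'(t) ≥ −β(h(t)) for all t ≥ 0. If h(0) ≥ 0, then h(t) ≥ 0 for all t ≥ 0. -/
/-! If `h t₁ < 0`, let `s` be the last time before `t₁` with `h s ≥ 0`. On `(s, t₁]` the function
is negative, so there `h' ≥ -β h ≥ -β 0 = 0`; hence `h` is monotone on `[s, t₁]` and
`h t₁ ≥ h s ≥ 0`, a contradiction. -/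

open Set

theorem exists_mem_Ico_nonneg_forall_Ioc_neg {f : ℝ → ℝ} {a b : ℝ} (hab : a ≤ b)
    (hf : ContinuousOn f (Icc a b)) (ha : 0 ≤ f a) (hb : f b < 0) :
    ∃ s ∈ Ico a b, 0 ≤ f s ∧ ∀ x ∈ Ioc s b, f x < 0 := by
  set S := {x ∈ Icc a b | 0 ≤ f x}
  have hS_bdd : BddAbove S := ⟨b, fun x hx => hx.1.2⟩
  have hs : sSup S ∈ S :=
    (isClosed_Icc.isClosed_le continuousOn_const hf).csSup_mem ⟨a, ⟨le_rfl, hab⟩, ha⟩ hS_bdd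
  refine ⟨sSup S, ⟨hs.1.1, lt_of_le_of_ne hs.1.2 ?_⟩, hs.2, fun x hx => ?_⟩
  · rintro hsb
    exact hb.not_ge (hsb ▸ hs.2)
  · by_contra! hfx
    exact hx.1.not_ge (le_csSup hS_bdd ⟨⟨hs.1.1.trans hx.1.le, hx.2⟩, hfx⟩)

theorem nonneg_of_deriv_nonneg_of_neg {f f' : ℝ → ℝ} {a b : ℝ} (hab : a ≤ b)
    (hf : ContinuousOn f (Icc a b)) (hf' : ∀ x ∈ Ioo a b, HasDerivAt f (f' x) x)
    (ha : 0 ≤ f a) (hf'₀ : ∀ x ∈ Ioo a b, f x < 0 → 0 ≤ f' x) : 0 ≤ f b := by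
  by_contra! hb
  obtain ⟨s, ⟨has, hsb⟩, hs, hneg⟩ := exists_mem_Ico_nonneg_forall_Ioc_neg hab hf ha hb
  have hsub : Icc s b ⊆ Icc a b := Icc_subset_Icc_left has
  have hmono : MonotoneOn f (Icc s b) := by
    refine monotoneOn_of_hasDerivWithinAt_nonneg (f' := f') (convex_Icc s b) (hf.mono hsub)
      (fun x hx => ?_) (fun x hx => ?_) <;> rw [interior_Icc] at hx
    · exact (hf' x ⟨has.trans_lt hx.1, hx.2⟩).hasDerivWithinAt
    · exact hf'₀ x ⟨has.trans_lt hx.1, hx.2⟩ (hneg x ⟨hx.1, hx.2.le⟩)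
  exact hb.not_ge (hs.trans (hmono (left_mem_Icc.2 hsb.le) (right_mem_Icc.2 hsb.le) hsb.le))

theorem cbf_comparison_lemma_general (β : ℝ → ℝ)
    (hmono : StrictMono β) (h0 : β 0 = 0)
    (h h' : ℝ → ℝ) (hderiv : ∀ t ≥ (0:ℝ), HasDerivAt h (h' t) t)
    (hineq : ∀ t ≥ (0:ℝ), h' t ≥ -β (h t)) (hinit : h 0 ≥ 0) :
    ∀ t ≥ (0:ℝ), h t ≥ 0 := by
  intro t ht
  refine nonneg_of_deriv_nonneg_of_neg ht (fun x hx => ?_) (fun x hx => hderiv x hx.1.le) hinit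
    (fun x hx hneg => ?_)
  · exact (hderiv x hx.1).continuousAt.continuousWithinAt
  · have hβ : β (h x) < 0 := h0 ▸ hmono hneg
    linarith [hineq x hx.1.le]

theorem cbf_comparison_lemma (β : ℝ → ℝ) (hcont : Continuous β)
    (hmono : StrictMono β) (h0 : β 0 = 0) (hlip : LocallyLipschitz β)
    (h h' : ℝ → ℝ) (hderiv : ∀ t ≥ (0:ℝ), HasDerivAt h (h' t) t)
    (hineq : ∀ t ≥ (0:ℝ), h' t ≥ -β (h t)) (hinit : h 0 ≥ 0) :
    ∀ t ≥ (0:ℝ), h t ≥ 0 :=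
  cbf_comparison_lemma_general β hmono h0 h h' hderiv hineq hinit
end

section
/- Consider the double integrator ẋ₁ = x₂, ẋ₂ = u, and the safety constraint b(x) = x₁ ≥ 0. Define ψ₀(x) = x₁ and ψ₁(x) = x₂ + γ₁x₁ with γ₁ > 0, and suppose a trajectory (x₁(t), x₂(t)) with control u(t) satisfies u(t) + γ₁x₂(t) + γ₂(x₂(t) + γ₁x₁(t)) ≥ 0 for all t ≥ 0, with γ₂ > 0. If ψ₀(x(0)) ≥ 0 and ψ₁(x(0)) ≥ 0, then x₁(t) ≥ 0 for all t ≥ 0. -/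
/-!
Each of `ψ₀ = x₁` and `ψ₁ = x₂ + γ₁ x₁` satisfies a differential inequality `ψ' + γ ψ ≥ 0`,
namely `ψ₁' + γ₂ ψ₁ ≥ 0` (the HOCBF condition) and `ψ₀' + γ₁ ψ₀ = ψ₁ ≥ 0`. Such an inequality
says that `t ↦ ψ t * exp (γ t)` is nondecreasing, so nonnegativity at time `0` propagates
forward: first to `ψ₁`, then to `ψ₀`.
-/

open Real Set

lemma hasDerivAt_mul_exp_mul {ψ : ℝ → ℝ} {dψ : ℝ} (γ : ℝ) {t : ℝ} (hψ : HasDerivAt ψ dψ t) :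
    HasDerivAt (fun s ↦ ψ s * exp (γ * s)) ((dψ + γ * ψ t) * exp (γ * t)) t := by
  have hexp : HasDerivAt (fun s ↦ exp (γ * s)) (exp (γ * t) * γ) t :=
    ((hasDerivAt_id t).const_mul γ).exp.congr_deriv (by simp)
  exact (hψ.mul hexp).congr_deriv (by ring)

lemma monotoneOn_mul_exp_mul_of_deriv_add_mul_nonneg {ψ ψ' : ℝ → ℝ} {γ a : ℝ}
    (hψ : ∀ t, HasDerivAt ψ (ψ' t) t) (hineq : ∀ t ≥ a, 0 ≤ ψ' t + γ * ψ t) :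
    MonotoneOn (fun t ↦ ψ t * exp (γ * t)) (Ici a) := by
  refine monotoneOn_of_hasDerivWithinAt_nonneg (convex_Ici a)
    (fun t _ ↦ (hasDerivAt_mul_exp_mul γ (hψ t)).continuousAt.continuousWithinAt)
    (fun t _ ↦ (hasDerivAt_mul_exp_mul γ (hψ t)).hasDerivWithinAt) fun t ht ↦ ?_
  rw [interior_Ici] at ht
  exact mul_nonneg (hineq t (le_of_lt ht)) (exp_pos _).le

lemma nonneg_of_deriv_add_mul_nonneg {ψ ψ' : ℝ → ℝ} {γ a : ℝ}
    (hψ : ∀ t, HasDerivAt ψ (ψ' t) t) (hineq : ∀ t ≥ a, 0 ≤ ψ' t + γ * ψ t) (ha : 0 ≤ ψ a) :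
    ∀ t ≥ a, 0 ≤ ψ t := by
  intro t ht
  have hmono := monotoneOn_mul_exp_mul_of_deriv_add_mul_nonneg hψ hineq self_mem_Ici ht ht
  have hweighted : 0 ≤ ψ t * exp (γ * t) :=
    (mul_nonneg ha (exp_pos _).le).trans hmono
  exact (mul_nonneg_iff_of_pos_right (exp_pos _)).1 hweighted

theorem hocbf_double_integrator_general (γ₁ γ₂ : ℝ)
    (x₁ x₂ u : ℝ → ℝ)
    (hd₁ : ∀ t, HasDerivAt x₁ (x₂ t) t)
    (hd₂ : ∀ t, HasDerivAt x₂ (u t) t)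
    (hcbf : ∀ t ≥ (0:ℝ), u t + γ₁ * x₂ t + γ₂ * (x₂ t + γ₁ * x₁ t) ≥ 0)
    (hψ₀ : x₁ 0 ≥ 0) (hψ₁ : x₂ 0 + γ₁ * x₁ 0 ≥ 0) :
    ∀ t ≥ (0:ℝ), x₁ t ≥ 0 := by
  have hψ₁_nonneg : ∀ t ≥ (0:ℝ), 0 ≤ x₂ t + γ₁ * x₁ t :=
    nonneg_of_deriv_add_mul_nonneg (fun t ↦ (hd₂ t).add ((hd₁ t).const_mul γ₁)) hcbf hψ₁
  exact nonneg_of_deriv_add_mul_nonneg hd₁ hψ₁_nonneg hψ₀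

/-- HOCBF theorem for the double integrator with linear class K functions. -/
theorem hocbf_double_integrator (γ₁ γ₂ : ℝ) (hγ₁ : 0 < γ₁) (hγ₂ : 0 < γ₂)
    (x₁ x₂ u : ℝ → ℝ) (hu : Continuous u)
    (hd₁ : ∀ t, HasDerivAt x₁ (x₂ t) t)
    (hd₂ : ∀ t, HasDerivAt x₂ (u t) t)
    (hcbf : ∀ t ≥ (0:ℝ), u t + γ₁ * x₂ t + γ₂ * (x₂ t + γ₁ * x₁ t) ≥ 0)
    (hψ₀ : x₁ 0 ≥ 0) (hψ₁ : x₂ 0 + γ₁ * x₁ 0 ≥ 0) :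
    ∀ t ≥ (0:ℝ), x₁ t ≥ 0 :=
  hocbf_double_integrator_general γ₁ γ₂ x₁ x₂ u hd₁ hd₂ hcbf hψ₀ hψ₁
end

section
/- Let ψ₀ = b and ψ_i = ψ̇_{i−1} + α_i(ψ_{i−1}) for i = 1,…,m as in the HOCBF construction, with C_i = {x : ψ_{i−1}(x) ≥ 0}. Along any trajectory x(t), if ψ_m(x(t)) ≥ 0 for all t ≥ 0 and x(0) ∈ C₁ ∩ … ∩ C_m, then x(t) ∈ C₁ ∩ … ∩ C_m for all t ≥ 0, assuming each ψ_{i−1} ∘ x is continuously differentiable with d/dt(ψ_{i−1}(x(t))) = ψ_i(x(t)) − α_i(ψ_{i−1}(x(t))) and each α_i is a locally Lipschitz extended class K function. -/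
/-!
Each `y t = ψ i (x t)` with `i < m` obeys `y' = ψ (i+1) (x t) - α (i+1) y`. Once
`ψ (i+1) (x t) ≥ 0` is known, `y' ≥ 0` wherever `y < 0` (because `α (i+1)` is negative on
negative reals), so `y` cannot leave `[0, ∞)`: after its last nonnegative point before a negative
value it would be nondecreasing. A downward induction from `ψ m (x t) ≥ 0` gives every level.
-/

open Set

lemma ContinuousOn.exists_nonneg_forall_neg {y : ℝ → ℝ} {a b : ℝ} (hab : a ≤ b)
    (hy : ContinuousOn y (Icc a b)) (ha : 0 ≤ y a) (hb : y b < 0) :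
    ∃ s ∈ Ico a b, 0 ≤ y s ∧ ∀ t ∈ Ioc s b, y t < 0 := by
  set S := Icc a b ∩ y ⁻¹' Ici 0
  have hS_closed : IsClosed S := hy.preimage_isClosed_of_isClosed isClosed_Icc isClosed_Ici
  have hS_bdd : BddAbove S := ⟨b, fun t ht => ht.1.2⟩
  have hsS : sSup S ∈ S := hS_closed.csSup_mem ⟨a, ⟨left_mem_Icc.2 hab, ha⟩⟩ hS_bdd
  refine ⟨sSup S, ⟨hsS.1.1, hsS.1.2.lt_of_ne fun hsb => hb.not_ge (hsb ▸ hsS.2)⟩, hsS.2,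
    fun t ht => ?_⟩
  by_contra! hyt
  exact ht.1.not_ge (le_csSup hS_bdd ⟨⟨hsS.1.1.trans ht.1.le, ht.2⟩, hyt⟩)

theorem nonneg_of_hasDerivAt_of_neg_imp_nonneg {y y' : ℝ → ℝ} {a : ℝ}
    (hd : ∀ t ≥ a, HasDerivAt y (y' t) t) (hy' : ∀ t ≥ a, y t < 0 → 0 ≤ y' t)
    (ha : 0 ≤ y a) :
    ∀ t ≥ a, 0 ≤ y t := by
  intro b hb
  by_contra! hyb
  have hcont : ContinuousOn y (Icc a b) := fun t ht => (hd t ht.1).continuousAt.continuousWithinAt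
  obtain ⟨s, ⟨has, hsb⟩, hys, hneg⟩ := hcont.exists_nonneg_forall_neg hb ha hyb
  have hmono : MonotoneOn y (Icc s b) := by
    refine monotoneOn_of_hasDerivWithinAt_nonneg (f' := y') (convex_Icc s b)
      (hcont.mono (Icc_subset_Icc_left has)) (fun t ht => ?_) (fun t ht => ?_)
    all_goals rw [interior_Icc] at ht
    · exact (hd t (has.trans ht.1.le)).hasDerivWithinAt
    · exact hy' t (has.trans ht.1.le) (hneg t ⟨ht.1, ht.2.le⟩)
  linarith [hmono (left_mem_Icc.2 hsb.le) (right_mem_Icc.2 hsb.le) hsb.le]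

theorem hocbf_forward_invariance_general {n : ℕ} (m : ℕ)
    (x : ℝ → (Fin n → ℝ)) (ψ : ℕ → (Fin n → ℝ) → ℝ) (α : ℕ → ℝ → ℝ)
    (hK : ∀ i, 1 ≤ i → i ≤ m →
      StrictMono (α i) ∧ α i 0 = 0 ∧ Continuous (α i) ∧ LocallyLipschitz (α i))
    (hderiv : ∀ i < m, ∀ t ≥ (0:ℝ),
      HasDerivAt (fun s => ψ i (x s)) (ψ (i + 1) (x t) - α (i + 1) (ψ i (x t))) t)
    (hcbf : ∀ t ≥ (0:ℝ), ψ m (x t) ≥ 0)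
    (hinit : ∀ i < m, ψ i (x 0) ≥ 0) :
    ∀ t ≥ (0:ℝ), ∀ i < m, ψ i (x t) ≥ 0 := by
  suffices h : ∀ i ≤ m, ∀ t ≥ (0:ℝ), 0 ≤ ψ i (x t) from fun t ht i hi => h i hi.le t ht
  intro i hi
  induction hi using Nat.decreasingInduction with
  | self => exact hcbf
  | of_succ i hi ih =>
    obtain ⟨hα_mono, hα_zero, -, -⟩ := hK (i + 1) (by omega) hi
    refine nonneg_of_hasDerivAt_of_neg_imp_nonneg (hderiv i hi) (fun t ht hneg => ?_) (hinit i hi)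
    have : α (i + 1) (ψ i (x t)) < 0 := hα_zero ▸ hα_mono hneg
    linarith [ih t ht]

/-- Forward invariance of the HOCBF sets along a fixed trajectory:
`ψ 0 = b`, and for `i < m`, `d/dt ψ i (x t) = ψ (i+1) (x t) − α (i+1) (ψ i (x t))`
with each `α (i+1)` a locally Lipschitz extended class K function. If
`ψ m (x t) ≥ 0` for all `t ≥ 0` and `ψ i (x 0) ≥ 0` for all `i < m`, then
`ψ i (x t) ≥ 0` for all `t ≥ 0` and all `i < m`. -/
theorem hocbf_forward_invariance {n : ℕ} (m : ℕ) (hm : 0 < m)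
    (x : ℝ → (Fin n → ℝ)) (ψ : ℕ → (Fin n → ℝ) → ℝ) (α : ℕ → ℝ → ℝ)
    (hK : ∀ i, 1 ≤ i → i ≤ m →
      StrictMono (α i) ∧ α i 0 = 0 ∧ Continuous (α i) ∧ LocallyLipschitz (α i))
    (hderiv : ∀ i < m, ∀ t ≥ (0:ℝ),
      HasDerivAt (fun s => ψ i (x s)) (ψ (i + 1) (x t) - α (i + 1) (ψ i (x t))) t)
    (hcbf : ∀ t ≥ (0:ℝ), ψ m (x t) ≥ 0)
    (hinit : ∀ i < m, ψ i (x 0) ≥ 0) :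
    ∀ t ≥ (0:ℝ), ∀ i < m, ψ i (x t) ≥ 0 :=
  hocbf_forward_invariance_general m x ψ α hK hderiv hcbf hinit
end
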